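/- Let K be a field of characteristic different from 2 and let a, b, c, d, x be nonzero elements of K. Then the quadratic form ⟨⟨a,b⟩⟩ ⊥ ⟨⟨c,d⟩⟩ ⊥ ⟨⟨a,bx⟩⟩ ⊥ ⟨⟨c,dx⟩⟩ ⊥ H⁶ (of dimension 28) is equivalent to ⟨⟨x,ac⟩⟩ ⊥ ⟨⟨a,c,x⟩⟩ ⊥ ⟨⟨a,b,bx⟩⟩ ⊥ ⟨⟨c,d,dx⟩⟩ (of dimension 28). (This is the equidimensional form of the Witt-ring identity established in display (3.3) of Proposition 3.3 of the paper.) -/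

import Mathlib

open QuadraticMap

/-- The `m`-fold Pfister form `⟨⟨a₁,…,a_m⟩⟩`: the diagonal quadratic form of dimension `2^m`
whose entries are the products `∏_{i ∈ S} (−a_i)` over all subsets `S` of `{1,…,m}`,
here modeled with subsets `S : Fin m → Bool`. -/
noncomputable def pfister (K : Type*) [Field K] {m : ℕ} (a : Fin m → K) :
    QuadraticForm K ((Fin m → Bool) → K) :=
  weightedSumSquares K (fun S : Fin m → Bool => ∏ i : Fin m, if S i then -a i else 1)

/-- `H^m`: the orthogonal sum of `m` copies of the hyperbolic plane `⟨1, −1⟩`. -/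
noncomputable def hypPlanes (K : Type*) [Field K] (m : ℕ) :
    QuadraticForm K (Fin m × Fin 2 → K) :=
  weightedSumSquares K (fun p : Fin m × Fin 2 => if p.2 = 0 then (1 : K) else -1)

/-!
Both sides are diagonal forms. Writing the six hyperbolic planes as `⟨s, -s⟩ ≃ ⟨1, -1⟩` for
suitable monomials `s`, every diagonal entry on either side is a monomial in the generators
`-1, a, b, c, d, x`. A diagonal form only depends on its entries up to order and nonzero square
factors, and the square class of a monomial only depends on its exponent vector modulo `2`. So the
identity reduces to the equality of two multisets of `28` vectors in `𝔽₂⁶`, which is decided by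
computation.
-/

open Finset QuadraticForm

theorem exists_equiv_comp_eq_of_map_univ_eq {ι ι' α : Type*} [Fintype ι] [Fintype ι']
    [DecidableEq α] {f : ι → α} {f' : ι' → α} (h : univ.val.map f = univ.val.map f') :
    ∃ e : ι ≃ ι', ∀ i, f' (e i) = f i := by
  have hcard (c : α) : Fintype.card {i // f i = c} = Fintype.card {j // f' j = c} := by
    simpa [Fintype.card_subtype, Finset.card_def, Multiset.count_map, eq_comm] using
      congrArg (Multiset.count c) h
  exact ⟨Equiv.ofFiberEquiv fun c => Fintype.equivOfCardEq (hcard c), Equiv.ofFiberEquiv_map _⟩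

section WeightedSumSquares

variable {K : Type*} [Field K] {ι ι' : Type*} [Fintype ι] [Fintype ι']

theorem weightedSumSquares_comp_equiv_equivalent (e : ι ≃ ι') (w : ι' → K) :
    Equivalent (weightedSumSquares K (w ∘ e)) (weightedSumSquares K w) :=
  ⟨{ (LinearEquiv.funCongrLeft K K e).symm with
      map_app' := fun v => by
        simp only [weightedSumSquares_apply]
        rw [← e.sum_comp]
        simp }⟩

theorem weightedSumSquares_equivalent_of_eq_mul_sq (e : ι ≃ ι') {w : ι → K} {w' : ι' → K}
    {t : ι → K} (ht : ∀ i, t i ≠ 0) (h : ∀ i, w i = w' (e i) * t i ^ 2) :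
    Equivalent (weightedSumSquares K w) (weightedSumSquares K w') :=
  .trans ⟨isometryEquivWeightedSumSquaresWeightedSumSquares (fun i => Units.mk0 (t i) (ht i))
    fun i => (h i).symm⟩ (weightedSumSquares_comp_equiv_equivalent e w')

theorem weightedSumSquares_sumElim_equivalent (w₁ : ι → K) (w₂ : ι' → K) :
    Equivalent (weightedSumSquares K (Sum.elim w₁ w₂))
      ((weightedSumSquares K w₁).prod (weightedSumSquares K w₂)) :=
  ⟨{ LinearEquiv.sumArrowLequivProdArrow ι ι' K K with
      map_app' := fun v => by simp [weightedSumSquares_apply, Fintype.sum_sum_type] }⟩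

end WeightedSumSquares

section Hyperbolic

variable {K : Type*} [Field K] {ι κ : Type*} [Fintype ι] [Fintype κ]

theorem weightedSumSquares_prod_equivalent_pi (w : ι × κ → K) :
    Equivalent (weightedSumSquares K w) (pi fun i => weightedSumSquares K fun k => w (i, k)) :=
  ⟨{ LinearEquiv.curry K K ι κ with
      map_app' := fun v => by simp [weightedSumSquares_apply, Fintype.sum_prod_type] }⟩

/-- In the coordinates `y` of `⟨1, -1⟩` and `f` of `⟨s, -s⟩` this is `y₀ + y₁ = s (f₀ + f₁)`,
`y₀ - y₁ = f₀ - f₁`, so `y₀² - y₁² = s (f₀² - f₁²)`; its inverse is the same map for `s⁻¹`. -/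
def hyperbolicRescale (h2 : (2 : K) ≠ 0) {s : K} (hs : s ≠ 0) :
    (Fin 2 → K) ≃ₗ[K] (Fin 2 → K) where
  toFun f := ![((s + 1) * f 0 + (s - 1) * f 1) / 2, ((s - 1) * f 0 + (s + 1) * f 1) / 2]
  invFun f := ![((s⁻¹ + 1) * f 0 + (s⁻¹ - 1) * f 1) / 2, ((s⁻¹ - 1) * f 0 + (s⁻¹ + 1) * f 1) / 2]
  map_add' f f' := by ext j; fin_cases j <;> simp <;> ring
  map_smul' r f := by ext j; fin_cases j <;> simp <;> ring
  left_inv f := by ext j; fin_cases j <;> simp <;> field_simp <;> ring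
  right_inv f := by ext j; fin_cases j <;> simp <;> field_simp <;> ring

theorem weightedSumSquares_hyperbolic_equivalent (h2 : (2 : K) ≠ 0) {s : K} (hs : s ≠ 0) :
    Equivalent (weightedSumSquares K ![s, -s]) (weightedSumSquares K ![(1 : K), -1]) :=
  ⟨{ hyperbolicRescale h2 hs with
      map_app' := fun f => by
        simp [hyperbolicRescale, weightedSumSquares_apply, Fin.sum_univ_two]
        field_simp
        ring }⟩

theorem weightedSumSquares_hyperbolic_family_equivalent (h2 : (2 : K) ≠ 0) {s : ι → K}
    (hs : ∀ i, s i ≠ 0) :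
    Equivalent (weightedSumSquares K fun p : ι × Fin 2 => ![s p.1, -s p.1] p.2)
      (weightedSumSquares K fun p : ι × Fin 2 => ![(1 : K), -1] p.2) :=
  (weightedSumSquares_prod_equivalent_pi fun p : ι × Fin 2 => ![s p.1, -s p.1] p.2).trans <|
    (Equivalent.pi fun i => weightedSumSquares_hyperbolic_equivalent h2 (hs i)).trans
      (weightedSumSquares_prod_equivalent_pi fun p : ι × Fin 2 => ![(1 : K), -1] p.2).symm

theorem hypPlanes_eq (m : ℕ) :
    hypPlanes K m = weightedSumSquares K fun p : Fin m × Fin 2 => ![(1 : K), -1] p.2 := by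
  unfold hypPlanes
  congr 1
  ext ⟨i, j⟩
  fin_cases j <;> rfl

end Hyperbolic

section Monomial

variable {K : Type*} [Field K] {σ : Type*} [Fintype σ] (g : σ → K)

def evalMonomial (v : σ → ℕ) : K :=
  ∏ k, g k ^ v k

@[simp]
theorem evalMonomial_zero : evalMonomial g 0 = 1 := by
  simp [evalMonomial]

theorem evalMonomial_add (v w : σ → ℕ) :
    evalMonomial g (v + w) = evalMonomial g v * evalMonomial g w := by
  simp [evalMonomial, pow_add, prod_mul_distrib]

theorem evalMonomial_sum {ι : Type*} (s : Finset ι) (v : ι → σ → ℕ) :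
    evalMonomial g (∑ i ∈ s, v i) = ∏ i ∈ s, evalMonomial g (v i) := by
  simp only [evalMonomial, Finset.sum_apply, ← prod_pow_eq_pow_sum]
  exact prod_comm

theorem evalMonomial_single [DecidableEq σ] (k : σ) : evalMonomial g (Pi.single k 1) = g k := by
  simp [evalMonomial, Pi.single_apply]

variable {g}

theorem evalMonomial_ne_zero (hg : ∀ k, g k ≠ 0) (v : σ → ℕ) : evalMonomial g v ≠ 0 :=
  prod_ne_zero_iff.2 fun k _ => pow_ne_zero _ (hg k)

theorem evalMonomial_eq_mod_two_mul_sq (v : σ → ℕ) :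
    evalMonomial g v =
      evalMonomial g (fun k => v k % 2) * evalMonomial g (fun k => v k / 2) ^ 2 := by
  conv_lhs => rw [show v = (fun k => v k % 2) + (fun k => v k / 2) + (fun k => v k / 2) from
    funext fun k => by simp only [Pi.add_apply]; omega]
  rw [evalMonomial_add, evalMonomial_add, mul_assoc, _root_.sq]

theorem weightedSumSquares_evalMonomial_equivalent {ι ι' : Type*} [Fintype ι] [Fintype ι']
    (hg : ∀ k, g k ≠ 0) (ℓ : ι → σ → ℕ) (ℓ' : ι' → σ → ℕ)
    (h : univ.val.map (fun i k => ℓ i k % 2) = univ.val.map (fun i k => ℓ' i k % 2)) :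
    Equivalent (weightedSumSquares K (evalMonomial g ∘ ℓ))
      (weightedSumSquares K (evalMonomial g ∘ ℓ')) := by
  classical
  obtain ⟨e, he⟩ := exists_equiv_comp_eq_of_map_univ_eq h
  refine weightedSumSquares_equivalent_of_eq_mul_sq e
    (t := fun i => evalMonomial g (fun k => ℓ i k / 2) / evalMonomial g (fun k => ℓ' (e i) k / 2))
    (fun i => div_ne_zero (evalMonomial_ne_zero hg _) (evalMonomial_ne_zero hg _)) fun i => ?_
  simp only [Function.comp_apply]
  rw [evalMonomial_eq_mod_two_mul_sq (ℓ i), evalMonomial_eq_mod_two_mul_sq (ℓ' (e i)), he i]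
  field_simp [evalMonomial_ne_zero hg]

end Monomial

section Exponents

variable {K : Type*} [Field K] {σ : Type*} [Fintype σ] [DecidableEq σ] {g : σ → K} {i₀ : σ}

def pfisterExponents {m : ℕ} (i₀ : σ) (v : Fin m → σ → ℕ) (S : Fin m → Bool) : σ → ℕ :=
  ∑ i, if S i then Pi.single i₀ 1 + v i else 0

def hyperbolicExponents {ι : Type*} (i₀ : σ) (μ : ι → σ → ℕ) (p : ι × Fin 2) : σ → ℕ :=
  ![μ p.1, Pi.single i₀ 1 + μ p.1] p.2

theorem pfister_equivalent_evalMonomial (hg₀ : g i₀ = -1) {m : ℕ} {a : Fin m → K}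
    (v : Fin m → σ → ℕ) (hv : ∀ i, evalMonomial g (v i) = a i) :
    Equivalent (pfister K a) (weightedSumSquares K (evalMonomial g ∘ pfisterExponents i₀ v)) := by
  unfold pfister
  convert Equivalent.refl _ using 2
  ext S
  simp only [Function.comp_apply, pfisterExponents, evalMonomial_sum]
  refine prod_congr rfl fun i _ => ?_
  split_ifs <;> simp [evalMonomial_add, evalMonomial_single, hg₀, hv]

theorem hypPlanes_equivalent_evalMonomial (h2 : (2 : K) ≠ 0) (hg : ∀ k, g k ≠ 0)
    (hg₀ : g i₀ = -1) {m : ℕ} (μ : Fin m → σ → ℕ) :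
    Equivalent (hypPlanes K m)
      (weightedSumSquares K (evalMonomial g ∘ hyperbolicExponents i₀ μ)) := by
  rw [hypPlanes_eq]
  convert (weightedSumSquares_hyperbolic_family_equivalent h2
    fun j => evalMonomial_ne_zero hg (μ j)).symm using 2
  ext ⟨j, k⟩
  fin_cases k <;> simp [hyperbolicExponents, evalMonomial_add, evalMonomial_single, hg₀]

end Exponents

theorem QuadraticMap.Equivalent.prod_comp_sumElim {K M₁ M₂ α ι ι' : Type*} [Field K]
    [AddCommGroup M₁] [Module K M₁] [AddCommGroup M₂] [Module K M₂] [Fintype ι] [Fintype ι']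
    {Q₁ : QuadraticForm K M₁} {Q₂ : QuadraticForm K M₂} {f : α → K} {ℓ₁ : ι → α} {ℓ₂ : ι' → α}
    (h₁ : Q₁.Equivalent (weightedSumSquares K (f ∘ ℓ₁)))
    (h₂ : Q₂.Equivalent (weightedSumSquares K (f ∘ ℓ₂))) :
    (Q₁.prod Q₂).Equivalent (weightedSumSquares K (f ∘ Sum.elim ℓ₁ ℓ₂)) := by
  rw [Sum.comp_elim]
  exact (h₁.prod h₂).trans (weightedSumSquares_sumElim_equivalent _ _).symm

section Identity

variable {σ : Type*} [DecidableEq σ] (i₀ : σ) (A B C D X : σ → ℕ)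

/-- `A, B, C, D, X` are the exponent vectors of `a, b, c, d, x` and `i₀` indexes the generator
`-1`. The six hyperbolic planes are realised as `⟨s, -s⟩` for `s = x, x, ac, acx, ax, cx`. -/
def lhsExponents : (Fin 2 → Bool) ⊕ (Fin 2 → Bool) ⊕ (Fin 2 → Bool) ⊕ (Fin 2 → Bool) ⊕
    Fin 6 × Fin 2 → σ → ℕ :=
  Sum.elim (pfisterExponents i₀ ![A, B]) <| Sum.elim (pfisterExponents i₀ ![C, D]) <|
    Sum.elim (pfisterExponents i₀ ![A, B + X]) <| Sum.elim (pfisterExponents i₀ ![C, D + X]) <|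
      hyperbolicExponents i₀ ![X, X, A + C, A + C + X, A + X, C + X]

def rhsExponents : (Fin 2 → Bool) ⊕ (Fin 3 → Bool) ⊕ (Fin 3 → Bool) ⊕ (Fin 3 → Bool) → σ → ℕ :=
  Sum.elim (pfisterExponents i₀ ![X, A + C]) <| Sum.elim (pfisterExponents i₀ ![A, C, X]) <|
    Sum.elim (pfisterExponents i₀ ![A, B, B + X]) (pfisterExponents i₀ ![C, D, D + X])

end Identity

theorem lhsExponents_mod_two_eq_rhsExponents :
    let e (k : Fin 6) : Fin 6 → ℕ := Pi.single k 1
    univ.val.map (fun i k => lhsExponents 0 (e 1) (e 2) (e 3) (e 4) (e 5) i k % 2) =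
      univ.val.map (fun i k => rhsExponents 0 (e 1) (e 2) (e 3) (e 4) (e 5) i k % 2) := by
  decide

theorem stmt_3 {K : Type*} [Field K] (hchar : ringChar K ≠ 2)
    (a b c d x : K) (ha : a ≠ 0) (hb : b ≠ 0) (hc : c ≠ 0) (hd : d ≠ 0) (hx : x ≠ 0) :
    QuadraticMap.Equivalent
      ((pfister K ![a, b]).prod ((pfister K ![c, d]).prod
        ((pfister K ![a, b * x]).prod ((pfister K ![c, d * x]).prod (hypPlanes K 6)))))
      ((pfister K ![x, a * c]).prod ((pfister K ![a, c, x]).prod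
        ((pfister K ![a, b, b * x]).prod (pfister K ![c, d, d * x])))) := by
  let g : Fin 6 → K := ![-1, a, b, c, d, x]
  have hg : ∀ k, g k ≠ 0 := by
    intro k
    fin_cases k <;> simp [g, *]
  have hg₀ : g 0 = -1 := rfl
  have h2 : (2 : K) ≠ 0 := Ring.two_ne_zero hchar
  have hmod := weightedSumSquares_evalMonomial_equivalent hg _ _
    lhsExponents_mod_two_eq_rhsExponents
  refine .trans (.prod_comp_sumElim ?_ <| .prod_comp_sumElim ?_ <| .prod_comp_sumElim ?_ <|
      .prod_comp_sumElim ?_ <| hypPlanes_equivalent_evalMonomial h2 hg hg₀ _) <|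
    hmod.trans <| .symm <|
      .prod_comp_sumElim ?_ <| .prod_comp_sumElim ?_ <| .prod_comp_sumElim ?_ ?_
  all_goals
    refine pfister_equivalent_evalMonomial hg₀ _ fun i => ?_
    fin_cases i <;> simp [evalMonomial_add, evalMonomial_single, g]
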